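/- Let {X_n} be a stationary real-valued process indexed by the integers, and let {P_k} be a nested sequence of countable partitions of the real line into intervals such that for every real x the diameter of the cell of P_k containing x tends to 0 as k → ∞. Let l_k be a nondecreasing sequence of positive integers with l_k ≤ k and l_k → ∞, and define stopping times ζ_0 = 0 and ζ_k = ζ_{k-1} + η_k, where η_k is the least t > 0 such that the P_k-quantized block of length l_k ending at position ζ_{k-1} + t equals the P_k-quantized block of length l_k ending at position ζ_{k-1}. Define the process X̂^{(k)}_n = X_{ζ_k + n} for n ∈ Z. Then for every k ≥ 0, n ≥ 0, m ∈ Z, and Borel set F ⊆ R^{n+1}, one has P((X̂^{(k)}_{m-n},…,X̂^{(k)}_m) ∈ F) = P((X_{m-n},…,X_m) ∈ F); in particular each process {X̂^{(k)}_n} is stationary with the same distribution as {X_n}. -/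

import Mathlib

open MeasureTheory Filter Set

noncomputable section

/-- `Q k x` is the cell of the `k`-th partition containing `x`: a nested sequence of
countable partitions of `ℝ` into intervals whose cells shrink to points. -/
def IsNestedIntervalQuantizer (Q : ℕ → ℝ → Set ℝ) : Prop :=
  (∀ k x, x ∈ Q k x) ∧
  (∀ k x, (Q k x).OrdConnected) ∧
  (∀ k x y, Q k x = Q k y ∨ Disjoint (Q k x) (Q k y)) ∧
  (∀ k, (Set.range (Q k)).Countable) ∧
  (∀ k x, Q (k + 1) x ⊆ Q k x) ∧
  (∀ x, Filter.Tendsto (fun k => EMetric.diam (Q k x)) Filter.atTop (nhds 0))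

/-- Block lengths `l k`: nondecreasing, `1 ≤ l k ≤ k`, tending to infinity. -/
def GoodLengths (l : ℕ → ℕ) : Prop :=
  Monotone l ∧ (∀ k, 1 ≤ l k) ∧ (∀ k, 1 ≤ k → l k ≤ k) ∧
    Filter.Tendsto l Filter.atTop Filter.atTop

/-- Two-sided stationarity of a real valued process. -/
def IsTwoSidedStationary {Ω : Type*} [MeasurableSpace Ω] (μ : Measure Ω) (X : ℤ → Ω → ℝ) : Prop :=
  Measure.map (fun ω (n : ℤ) => X (n + 1) ω) μ = Measure.map (fun ω (n : ℤ) => X n ω) μ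

variable {Ω : Type*}

/-- `recEta Q l X k b ω` is the waiting time for the next recurrence of the `P_k`-quantized
block of length `l k` ending at position `b`. -/
def recEta (Q : ℕ → ℝ → Set ℝ) (l : ℕ → ℕ) (X : ℤ → Ω → ℝ) (k : ℕ) (b : ℤ) (ω : Ω) : ℕ :=
  sInf {t : ℕ | 0 < t ∧ ∀ i < l k, Q k (X (b + t - i) ω) = Q k (X (b - i) ω)}

/-- The stopping times `ζ_k` defined by quantized block recurrence. -/
def recZeta (Q : ℕ → ℝ → Set ℝ) (l : ℕ → ℕ) (X : ℤ → Ω → ℝ) : ℕ → Ω → ℤ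
  | 0, _ => 0
  | k + 1, ω => recZeta Q l X k ω + recEta Q l X (k + 1) (recZeta Q l X k ω) ω

/-- The σ-field `σ(X_0^{ζ})` generated by the data segment `X_0, …, X_ζ`. -/
def sigmaSeg [MeasurableSpace Ω] (X : ℤ → Ω → ℝ) (ζ : Ω → ℤ) : MeasurableSpace Ω :=
  MeasurableSpace.comap
    (fun ω => (ζ ω, fun n : ℕ => if (n : ℤ) ≤ ζ ω then X n ω else 0)) inferInstance

/-- The σ-field `σ(X_{-∞}^{ζ})` generated by the whole past up to time `ζ`. -/
def sigmaPastAt [MeasurableSpace Ω] (X : ℤ → Ω → ℝ) (ζ : Ω → ℤ) : MeasurableSpace Ω :=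
  MeasurableSpace.comap (fun ω => (ζ ω, fun n : ℕ => X (ζ ω - n) ω)) inferInstance

/-- The σ-field `σ(X_{-∞}^{0})` of the infinite past. -/
def sigmaPast [MeasurableSpace Ω] (X : ℤ → Ω → ℝ) : MeasurableSpace Ω :=
  MeasurableSpace.comap (fun ω => fun n : ℕ => X (-(n : ℤ)) ω) inferInstance

/-- The metric `d*` on one-sided sequences `(…, x_{-1}, x_0)`, with `x i` standing
for the coordinate `x_{-i}`. -/
def dstar (x y : ℕ → ℝ) : ℝ :=
  ∑' i : ℕ, (1 / 2 ^ (i + 1)) * (|x i - y i| / (1 + |x i - y i|))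

/-- Continuity of `e` on the set `C` with respect to the metric `d*`. -/
def DStarContinuousOn (e : (ℕ → ℝ) → ℝ) (C : Set (ℕ → ℝ)) : Prop :=
  ∀ x ∈ C, ∀ ε > 0, ∃ δ > 0, ∀ y ∈ C, dstar x y < δ → |e y - e x| < ε

end

/-!
Let `ν` be the law of the path `(X_j)_j` on `ℤ → ℝ`; stationarity makes every shift
`ν`-preserving, and the claim says that the random shift `x ↦ x (· + ζ_k x)` preserves `ν`.
A random shift `x ↦ τ (ζ x) x` of a measure-preserving `ℤ`-action preserves a finite measure as
soon as it is a.e. injective: it carries `{ζ = j}` onto `τ j {ζ = j}`, these images are a.e.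
disjoint, so the image measure is at most `ν`, and both have the same total mass.
Injectivity comes from Poincaré recurrence: a.e. every quantized block recurs, and then the map
`u ↦ u + η u` sending a position to the next recurrence of the block ending there is injective,
so distinct starting positions yield distinct chains `ζ_0, ζ_1, …`.
-/

open Function

section RandomShift

variable {α : Type*} [MeasurableSpace α] {ν : Measure α} {τ : ℤ → α → α} {ζ : α → ℤ}

theorem measurable_randomShift (hτ : ∀ c, Measurable (τ c)) (hζ : Measurable ζ) :
    Measurable fun x => τ (ζ x) x :=
  (measurable_from_prod_countable_left (f := fun p : α × ℤ => τ p.2 p.1) hτ).comp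
    (measurable_id.prodMk hζ)

theorem measure_preimage_randomShift_le (hτ : ∀ c, MeasurePreserving (τ c) ν ν)
    (hτ_neg : ∀ c x, τ c (τ (-c) x) = x) (hζ : Measurable ζ)
    (hinj : ∀ᵐ x ∂ν, ∀ y, τ (ζ y) y = τ (ζ x) x → y = x) {G : Set α} (hG : MeasurableSet G) :
    ν ((fun x => τ (ζ x) x) ⁻¹' G) ≤ ν G := by
  set B : ℤ → Set α := fun j => τ (-j) ⁻¹' {x | ζ x = j}
  have hB : ∀ j, MeasurableSet (B j) := fun j =>
    (hτ (-j)).measurable (hζ (measurableSet_singleton j))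
  have hB_disj : Pairwise (AEDisjoint ν on B) := by
    intro j j' hjj'
    have hret : ∀ {i y}, y ∈ B i → τ (ζ (τ (-i) y)) (τ (-i) y) = y := fun {i y} hy => by
      rw [show ζ (τ (-i) y) = i from hy, hτ_neg]
    refine measure_mono_null ?_
      ((hτ (-j)).quasiMeasurePreserving.preimage_null (ae_iff.1 hinj))
    rintro y ⟨hyj, hyj'⟩ hgood
    refine hjj' ?_
    have hsame := hgood _ ((hret hyj').trans (hret hyj).symm)
    rw [← show ζ (τ (-j) y) = j from hyj, ← show ζ (τ (-j') y) = j' from hyj', hsame]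
  have hpre : ∀ j, τ (-j) ⁻¹' ({x | ζ x = j} ∩ τ j ⁻¹' G) = B j ∩ G := fun j => by
    ext y; simp [B, hτ_neg]
  calc ν ((fun x => τ (ζ x) x) ⁻¹' G) = ν (⋃ j, {x | ζ x = j} ∩ τ j ⁻¹' G) := by
        congr 1; ext x; simp
    _ = ∑' j, ν ({x | ζ x = j} ∩ τ j ⁻¹' G) :=
        measure_iUnion
          (fun j j' hjj' => Set.disjoint_left.2 fun x hx hx' => hjj' (hx.1.symm.trans hx'.1))
          fun j => (hζ (measurableSet_singleton j)).inter ((hτ j).measurable hG)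
    _ = ∑' j, ν (B j ∩ G) := tsum_congr fun j => by
        rw [← hpre, (hτ (-j)).measure_preimage]
        exact ((hζ (measurableSet_singleton j)).inter ((hτ j).measurable hG)).nullMeasurableSet
    _ = ν (⋃ j, B j ∩ G) :=
        (measure_iUnion₀
          (fun j j' hjj' => (hB_disj hjj').mono Set.inter_subset_left Set.inter_subset_left)
          fun j => ((hB j).inter hG).nullMeasurableSet).symm
    _ ≤ ν G := measure_mono (Set.iUnion_subset fun j => Set.inter_subset_right)

theorem measurePreserving_randomShift [IsFiniteMeasure ν]
    (hτ : ∀ c, MeasurePreserving (τ c) ν ν) (hτ_neg : ∀ c x, τ c (τ (-c) x) = x) (hζ : Measurable ζ)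
    (hinj : ∀ᵐ x ∂ν, ∀ y, τ (ζ y) y = τ (ζ x) x → y = x) :
    MeasurePreserving (fun x => τ (ζ x) x) ν ν := by
  have hS := measurable_randomShift (fun c => (hτ c).measurable) hζ
  refine ⟨hS, Measure.eq_of_le_of_measure_univ_eq (Measure.le_iff.2 fun G hG => ?_) ?_⟩
  · rw [Measure.map_apply hS hG]
    exact measure_preimage_randomShift_le hτ hτ_neg hζ hinj hG
  · rw [Measure.map_apply hS MeasurableSet.univ, Set.preimage_univ]

end RandomShift

section SeqShift

variable {β : Type*}

def seqShift (c : ℤ) (x : ℤ → β) : ℤ → β := fun n => x (n + c)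

@[simp]
theorem seqShift_apply (c : ℤ) (x : ℤ → β) (n : ℤ) : seqShift c x n = x (n + c) := rfl

@[simp]
theorem seqShift_seqShift (c d : ℤ) (x : ℤ → β) :
    seqShift c (seqShift d x) = seqShift (c + d) x := by
  ext n; simp [add_assoc]

@[simp]
theorem seqShift_zero (x : ℤ → β) : seqShift 0 x = x := by
  ext n; simp

theorem seqShift_seqShift_neg (c : ℤ) (x : ℤ → β) : seqShift c (seqShift (-c) x) = x := by
  simp

theorem iterate_seqShift (c : ℤ) (n : ℕ) :
    (seqShift c)^[n] = seqShift (n * c : ℤ) (β := β) := by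
  induction n with
  | zero => funext x; simp
  | succ n ih => funext x; rw [iterate_succ_apply', ih, seqShift_seqShift]; push_cast; ring_nf

variable [MeasurableSpace β] {ν : Measure (ℤ → β)}

theorem measurable_seqShift (c : ℤ) : Measurable (seqShift c : (ℤ → β) → ℤ → β) :=
  measurable_pi_lambda _ fun n => measurable_pi_apply (n + c)

theorem measurePreserving_seqShift (h : MeasurePreserving (seqShift 1) ν ν) (c : ℤ) :
    MeasurePreserving (seqShift c) ν ν := by
  have hneg : MeasurePreserving (seqShift (-1)) ν ν := by
    refine ⟨measurable_seqShift _, ?_⟩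
    conv_lhs => rw [← h.map_eq, Measure.map_map (measurable_seqShift _) (measurable_seqShift _)]
    simp [comp_def, Measure.map_id']
  obtain ⟨n, rfl | rfl⟩ := Int.eq_nat_or_neg c
  · simpa [iterate_seqShift] using h.iterate n
  · simpa [iterate_seqShift] using hneg.iterate n

end SeqShift

section FirstReturn

variable {γ : Type*}

/-- `0` when `f` never returns to its value at `b`. -/
noncomputable def firstReturn (f : ℤ → γ) (b : ℤ) : ℕ :=
  sInf {t : ℕ | 0 < t ∧ f (b + t) = f b}

theorem firstReturn_comp_add_right (f : ℤ → γ) (c b : ℤ) :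
    firstReturn (fun a => f (a + c)) b = firstReturn f (b + c) := by
  simp only [firstReturn, add_right_comm b]

/-- If `u < v` return to their values at the same place `w`, then `f v = f w = f u`, so `u`
returns already at `v`, before `w`. -/
theorem injective_add_firstReturn {f : ℤ → γ} (h : ∀ b, ∃ t : ℕ, 0 < t ∧ f (b + t) = f b) :
    Injective fun b => b + (firstReturn f b : ℤ) := by
  have key : ∀ u v, u < v → u + (firstReturn f u : ℤ) ≠ v + firstReturn f v := by
    intro u v huv hw
    obtain ⟨-, hu⟩ : 0 < firstReturn f u ∧ f (u + firstReturn f u) = f u := Nat.sInf_mem (h u)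
    obtain ⟨hv_pos, hv⟩ : 0 < firstReturn f v ∧ f (v + firstReturn f v) = f v :=
      Nat.sInf_mem (h v)
    have hvu : f (u + (v - u).toNat) = f u := by
      rw [show u + ((v - u).toNat : ℤ) = v by omega, ← hv]
      exact (congrArg f hw).symm.trans hu
    have : firstReturn f u ≤ (v - u).toNat := Nat.sInf_le ⟨by omega, hvu⟩
    omega
  intro u v huv
  rcases lt_trichotomy u v with h | h | h
  exacts [(key u v h huv).elim, h, (key v u h huv.symm).elim]

theorem Nat.sInf_eq_iff {s : Set ℕ} {t : ℕ} :
    sInf s = t ↔ (t ∈ s ∨ t = 0 ∧ s = ∅) ∧ ∀ r < t, r ∉ s := by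
  constructor
  · rintro rfl
    refine ⟨?_, fun r => Nat.notMem_of_lt_sInf⟩
    rcases s.eq_empty_or_nonempty with hs | hs
    · exact Or.inr ⟨by simp [hs], hs⟩
    · exact Or.inl (Nat.sInf_mem hs)
  · rintro ⟨ht | ⟨rfl, hs⟩, hmin⟩
    · exact le_antisymm (Nat.sInf_le ht) (not_lt.1 fun hlt => hmin _ hlt (Nat.sInf_mem ⟨t, ht⟩))
    · simp [hs]

theorem measurable_sInf_setOf_nat {α : Type*} [MeasurableSpace α] {p : ℕ → α → Prop}
    (hp : ∀ t, MeasurableSet {x | p t x}) : Measurable fun x => sInf {t | p t x} := by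
  refine measurable_to_countable' fun t => ?_
  have hp' : ∀ t, Measurable (p t) := fun t => measurableSet_setOfPred.1 (hp t)
  simp only [Set.preimage, Set.mem_singleton_iff, Nat.sInf_eq_iff,
    Set.eq_empty_iff_forall_notMem, Set.mem_ofPred_eq]
  exact Measurable.setOf <|
    ((hp' t).or (measurable_const.and (Measurable.forall fun r => (hp' r).not))).and
      (Measurable.forall fun r => Measurable.forall fun _ => (hp' r).not)

theorem measurable_firstReturn {α : Type*} [MeasurableSpace α] {F : α → ℤ → γ}
    (hF : ∀ a b, MeasurableSet {x | F x a = F x b}) (b : ℤ) :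
    Measurable fun x => firstReturn (F x) b :=
  measurable_sInf_setOf_nat fun t => (MeasurableSet.const (0 < t)).inter (hF (b + t) b)

end FirstReturn

theorem ae_exists_iterate_eq_of_countable_range {α γ : Type*} [MeasurableSpace α]
    {ν : Measure α} [IsFiniteMeasure ν] {T : α → α} (hT : MeasurePreserving T ν ν) {q : α → γ}
    (hq : (range q).Countable) (hq_meas : ∀ c, MeasurableSet (q ⁻¹' {c})) :
    ∀ᵐ x ∂ν, ∃ n, 0 < n ∧ q (T^[n] x) = q x := by
  have := hq.to_subtype
  have hrec : ∀ᵐ x ∂ν, ∀ c : range q, q x = c → ∃ᶠ n in atTop, q (T^[n] x) = c :=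
    ae_all_iff.2 fun c =>
      hT.conservative.ae_mem_imp_frequently_image_mem (hq_meas c).nullMeasurableSet
  filter_upwards [hrec] with x hx
  obtain ⟨n, hn, hqn⟩ := frequently_atTop.1 (hx ⟨q x, mem_range_self x⟩ rfl) 1
  exact ⟨n, hn, hqn⟩

theorem measurableSet_setOf_comp_eq {α β γ : Type*} [MeasurableSpace α] [MeasurableSpace β]
    {q : β → γ} (hq : (range q).Countable) (hq_meas : ∀ c, MeasurableSet (q ⁻¹' {c}))
    {f g : α → β} (hf : Measurable f) (hg : Measurable g) :
    MeasurableSet {a | q (f a) = q (g a)} := by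
  have : {a | q (f a) = q (g a)} =
      ⋃ c ∈ range q, f ⁻¹' (q ⁻¹' {c}) ∩ g ⁻¹' (q ⁻¹' {c}) := by
    ext a; simp [eq_comm]
  rw [this]
  exact MeasurableSet.biUnion hq fun c _ => (hf (hq_meas c)).inter (hg (hq_meas c))

section QuantizedBlock

variable {β γ : Type*}

/-- The block `(q (x a), q (x (a - 1)), …, q (x (a - L + 1)))` of length `L` ending at `a`. -/
def quantizedBlock (q : β → γ) (L : ℕ) (x : ℤ → β) (a : ℤ) : Fin L → γ :=
  fun i => q (x (a - i))

theorem quantizedBlock_seqShift (q : β → γ) (L : ℕ) (c : ℤ) (x : ℤ → β) (a : ℤ) :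
    quantizedBlock q L (seqShift c x) a = quantizedBlock q L x (a + c) := by
  ext i; simp [quantizedBlock, sub_add_eq_add_sub]

theorem recEta_eq_firstReturn {Ω : Type*} (Q : ℕ → ℝ → Set ℝ) (l : ℕ → ℕ) (X : ℤ → Ω → ℝ)
    (k : ℕ) (b : ℤ) (ω : Ω) :
    recEta Q l X k b ω = firstReturn (quantizedBlock (Q k) (l k) fun j => X j ω) b := by
  simp only [recEta, firstReturn, quantizedBlock, funext_iff, Fin.forall_iff]

theorem countable_range_quantizedBlock {q : β → γ} (hq : (range q).Countable)
    (L : ℕ) (a : ℤ) :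
    (range fun x => quantizedBlock q L x a).Countable :=
  (Set.countable_pi fun _ => hq).mono <| by rintro _ ⟨x, rfl⟩ i; exact mem_range_self _

variable [MeasurableSpace β] {q : β → γ}

theorem measurableSet_quantizedBlock_preimage (hq_meas : ∀ c, MeasurableSet (q ⁻¹' {c}))
    (L : ℕ) (a : ℤ) (p : Fin L → γ) :
    MeasurableSet ((fun x => quantizedBlock q L x a) ⁻¹' {p}) := by
  have : (fun x => quantizedBlock q L x a) ⁻¹' {p} =
      ⋂ i, (fun x => x (a - i)) ⁻¹' (q ⁻¹' {p i}) := by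
    ext x; simp [quantizedBlock, funext_iff]
  rw [this]
  exact MeasurableSet.iInter fun i => measurable_pi_apply _ (hq_meas (p i))

theorem measurableSet_quantizedBlock_eq (hq : (range q).Countable)
    (hq_meas : ∀ c, MeasurableSet (q ⁻¹' {c})) (L : ℕ) (a b : ℤ) :
    MeasurableSet {x | quantizedBlock q L x a = quantizedBlock q L x b} := by
  simp only [quantizedBlock, funext_iff, ofPred_forall]
  exact MeasurableSet.iInter fun i =>
    measurableSet_setOf_comp_eq hq hq_meas (measurable_pi_apply _) (measurable_pi_apply _)

end QuantizedBlock

namespace IsNestedIntervalQuantizer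

variable {Q : ℕ → ℝ → Set ℝ}

theorem cell_eq_iff_mem (hQ : IsNestedIntervalQuantizer Q) {k : ℕ} {y z : ℝ} :
    Q k y = Q k z ↔ y ∈ Q k z :=
  ⟨fun h => h ▸ hQ.1 k y, fun hy => (hQ.2.2.1 k y z).resolve_right
    fun hdisj => hdisj.ne_of_mem (hQ.1 k y) hy rfl⟩

theorem countable_range (hQ : IsNestedIntervalQuantizer Q) (k : ℕ) : (range (Q k)).Countable :=
  hQ.2.2.2.1 k

theorem measurableSet_preimage_singleton (hQ : IsNestedIntervalQuantizer Q) (k : ℕ)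
    (s : Set ℝ) : MeasurableSet (Q k ⁻¹' {s}) := by
  by_cases hs : s ∈ range (Q k)
  · obtain ⟨z, rfl⟩ := hs
    have : Q k ⁻¹' {Q k z} = Q k z := by ext y; exact hQ.cell_eq_iff_mem
    rw [this]
    exact (hQ.2.1 k z).measurableSet
  · rw [Set.preimage_singleton_eq_empty.2 hs]
    exact MeasurableSet.empty

end IsNestedIntervalQuantizer

section BlockRecurrence

variable {Q : ℕ → ℝ → Set ℝ} {l : ℕ → ℕ}

noncomputable def recZetaPath (Q : ℕ → ℝ → Set ℝ) (l : ℕ → ℕ) (k : ℕ) : (ℤ → ℝ) → ℤ :=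
  recZeta Q l (fun n x => x n) k

theorem recZeta_eq_recZetaPath {Ω : Type*} (X : ℤ → Ω → ℝ) (k : ℕ) (ω : Ω) :
    recZeta Q l X k ω = recZetaPath Q l k fun j => X j ω := by
  induction k with
  | zero => rfl
  | succ k ih => rw [recZeta, ih]; rfl

@[simp]
theorem recZetaPath_zero (x : ℤ → ℝ) : recZetaPath Q l 0 x = 0 := rfl

theorem recZetaPath_succ (k : ℕ) (x : ℤ → ℝ) :
    recZetaPath Q l (k + 1) x = recZetaPath Q l k x +
      firstReturn (quantizedBlock (Q (k + 1)) (l (k + 1)) x) (recZetaPath Q l k x) := by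
  rw [recZetaPath, recZeta, recEta_eq_firstReturn]; rfl

theorem measurable_recZetaPath (hQ : IsNestedIntervalQuantizer Q) (k : ℕ) :
    Measurable (recZetaPath Q l k) := by
  induction k with
  | zero => exact measurable_const
  | succ k ih =>
    have hF : Measurable fun p : (ℤ → ℝ) × ℤ =>
        firstReturn (quantizedBlock (Q (k + 1)) (l (k + 1)) p.1) p.2 :=
      measurable_from_prod_countable_left <| measurable_firstReturn
        (measurableSet_quantizedBlock_eq (hQ.countable_range _)
          (hQ.measurableSet_preimage_singleton _) _)
    rw [show recZetaPath Q l (k + 1) = _ from funext (recZetaPath_succ k)]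
    exact ih.add (measurable_from_top.comp (hF.comp (measurable_id.prodMk ih)))

def BlocksRecur (Q : ℕ → ℝ → Set ℝ) (l : ℕ → ℕ) (x : ℤ → ℝ) : Prop :=
  ∀ k b, ∃ t : ℕ, 0 < t ∧
    quantizedBlock (Q k) (l k) x (b + t) = quantizedBlock (Q k) (l k) x b

theorem ae_blocksRecur (hQ : IsNestedIntervalQuantizer Q) {ν : Measure (ℤ → ℝ)}
    [IsFiniteMeasure ν] (hν : ∀ c, MeasurePreserving (seqShift c) ν ν) :
    ∀ᵐ x ∂ν, BlocksRecur Q l x := by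
  refine ae_all_iff.2 fun k => ae_all_iff.2 fun b => ?_
  have hrec := ae_exists_iterate_eq_of_countable_range (hν 1)
    (countable_range_quantizedBlock (hQ.countable_range k) (l k) 0)
    (measurableSet_quantizedBlock_preimage (hQ.measurableSet_preimage_singleton k) (l k) 0)
  filter_upwards [(hν b).quasiMeasurePreserving.ae hrec] with x ⟨n, hn, hx⟩
  refine ⟨n, hn, ?_⟩
  simpa [iterate_seqShift, quantizedBlock_seqShift, add_comm] using hx

/-- Shifting the path by `c` shifts every position of the chain `ζ_0, ζ_1, …` by `c`, and each
step of the chain is the injective map `u ↦ u + firstReturn _ u`. -/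
theorem injective_recZetaPath_seqShift_add {x : ℤ → ℝ} (hx : BlocksRecur Q l x) (k : ℕ) :
    Injective fun c => recZetaPath Q l k (seqShift c x) + c := by
  induction k with
  | zero => simp only [recZetaPath_zero, zero_add]; exact injective_id
  | succ k ih =>
    have hstep := injective_add_firstReturn (hx (k + 1))
    convert hstep.comp ih using 1
    funext c
    simp only [comp_apply, recZetaPath_succ, funext (quantizedBlock_seqShift _ _ c x),
      firstReturn_comp_add_right]
    ring

theorem eq_of_seqShift_recZetaPath_eq {x y : ℤ → ℝ} (hx : BlocksRecur Q l x) (k : ℕ)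
    (h : seqShift (recZetaPath Q l k y) y = seqShift (recZetaPath Q l k x) x) : y = x := by
  set ζ := recZetaPath Q l k
  have hy : y = seqShift (ζ x - ζ y) x := calc
    y = seqShift (-ζ y) (seqShift (ζ y) y) := by simp
    _ = seqShift (ζ x - ζ y) x := by rw [h, seqShift_seqShift, neg_add_eq_sub]
  have hd : ζ x - ζ y = 0 := injective_recZetaPath_seqShift_add hx k <| by
    simp only [← hy, seqShift_zero]; ring
  rw [hy, hd, seqShift_zero]

end BlockRecurrence

theorem IsTwoSidedStationary.measurePreserving_seqShift_one {Ω : Type*} [MeasurableSpace Ω]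
    {μ : Measure Ω} {X : ℤ → Ω → ℝ} (hstat : IsTwoSidedStationary μ X)
    (hX : ∀ n, Measurable (X n)) :
    MeasurePreserving (seqShift 1) (μ.map fun ω n => X n ω) (μ.map fun ω n => X n ω) :=
  ⟨measurable_seqShift 1, by
    rw [Measure.map_map (measurable_seqShift 1) (measurable_pi_lambda _ hX)]
    exact hstat⟩

theorem intermittent_shifted_process_same_distribution_general
    {Ω : Type*} [MeasurableSpace Ω] (μ : Measure Ω) [IsProbabilityMeasure μ]
    (X : ℤ → Ω → ℝ) (hXmeas : ∀ n, Measurable (X n)) (hstat : IsTwoSidedStationary μ X)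
    (Q : ℕ → ℝ → Set ℝ) (hQ : IsNestedIntervalQuantizer Q)
    (l : ℕ → ℕ) :
    ∀ (k n : ℕ) (m : ℤ) (F : Set (Fin (n + 1) → ℝ)), MeasurableSet F →
      μ {ω | (fun i : Fin (n + 1) =>
          X (recZeta Q l X k ω + m - n + ((i : ℕ) : ℤ)) ω) ∈ F}
        = μ {ω | (fun i : Fin (n + 1) => X (m - n + ((i : ℕ) : ℤ)) ω) ∈ F} := by
  intro k n m F hF
  have hπ : MeasurePreserving (fun ω j => X j ω) μ (μ.map fun ω j => X j ω) :=
    ⟨measurable_pi_lambda _ hXmeas, rfl⟩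
  have := Measure.isProbabilityMeasure_map hπ.measurable.aemeasurable (μ := μ)
  have hshift := measurePreserving_seqShift (hstat.measurePreserving_seqShift_one hXmeas)
  have hS := measurePreserving_randomShift hshift seqShift_seqShift_neg
    (measurable_recZetaPath hQ k) ((ae_blocksRecur hQ hshift).mono fun x hx y =>
      eq_of_seqShift_recZetaPath_eq (l := l) hx k)
  set G := {x : ℤ → ℝ | (fun i : Fin (n + 1) => x (m - n + ((i : ℕ) : ℤ))) ∈ F}
  have hG : MeasurableSet G := (measurable_pi_lambda _ fun i => measurable_pi_apply _) hF
  calc _ = μ ((fun ω j => X j ω) ⁻¹' ((fun x => seqShift (recZetaPath Q l k x) x) ⁻¹' G)) := by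
        congr 1; ext ω
        simp only [mem_ofPred_eq, mem_preimage, G, seqShift_apply, recZeta_eq_recZetaPath]
        ring_nf
    _ = μ ((fun ω j => X j ω) ⁻¹' G) := by
        rw [hπ.measure_preimage (hS.measurable hG).nullMeasurableSet,
          hS.measure_preimage hG.nullMeasurableSet, hπ.measure_preimage hG.nullMeasurableSet]

/-- The process viewed from the stopping time `ζ_k`, i.e. `X̂^{(k)}_n = X_{ζ_k+n}`,
has the same finite dimensional distributions as the original stationary process. -/
theorem intermittent_shifted_process_same_distribution
    {Ω : Type*} [MeasurableSpace Ω] (μ : Measure Ω) [IsProbabilityMeasure μ]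
    (X : ℤ → Ω → ℝ) (hXmeas : ∀ n, Measurable (X n)) (hstat : IsTwoSidedStationary μ X)
    (Q : ℕ → ℝ → Set ℝ) (hQ : IsNestedIntervalQuantizer Q)
    (l : ℕ → ℕ) (hl : GoodLengths l) :
    ∀ (k n : ℕ) (m : ℤ) (F : Set (Fin (n + 1) → ℝ)), MeasurableSet F →
      μ {ω | (fun i : Fin (n + 1) =>
          X (recZeta Q l X k ω + m - n + ((i : ℕ) : ℤ)) ω) ∈ F}
        = μ {ω | (fun i : Fin (n + 1) => X (m - n + ((i : ℕ) : ℤ)) ω) ∈ F} :=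
  intermittent_shifted_process_same_distribution_general μ X hXmeas hstat Q hQ l
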